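/- With notation as in the differential equation S'² = G·(H∘S) truncated modulo x^d (where (S_d')² ≡ G·(H∘S_d) mod x^d and the relevant series are invertible), the integrating factor J_{2d} = exp(-∫ G·(H'∘S_d)/(2 S_d') dx) satisfies J_{2d} ≡ 1/√(H∘S_d) (mod x^d), i.e., (J_{2d})² · (H∘S_d) ≡ 1 (mod x^d). -/

import Mathlib

/-!
Put `F = J² · (H ∘ S)`. The chain rule `(H ∘ S)' = (H' ∘ S) · S'` and the equation defining `J`
give `S' · F' = J² · (H' ∘ S) · (S'² - G · (H ∘ S))`, which vanishes modulo `x^d`.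
As `S'(0) = β ≠ 0`, `S'` is a unit, so `F' ≡ 0 (mod x^d)`; with `F(0) = 1` this forces
`F ≡ 1 (mod x^(d+1))` in characteristic zero.
-/

open PowerSeries

namespace PowerSeries

variable {R : Type*}

theorem constantCoeff_derivative [CommSemiring R] (f : R⟦X⟧) :
    constantCoeff (d⁄dX R f) = coeff 1 f := by
  simp [← coeff_zero_eq_constantCoeff_apply, coeff_derivative]

theorem constantCoeff_aeval [CommRing R] (f : R⟦X⟧) (p : Polynomial R) :
    constantCoeff (Polynomial.aeval f p) = p.eval (constantCoeff f) := by
  rw [Polynomial.aeval_def, Polynomial.hom_eval₂, Polynomial.eval]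
  congr 1

theorem X_pow_succ_dvd_sub_constantCoeff [CommRing R] [IsAddTorsionFree R] {f : R⟦X⟧} {n : ℕ}
    (h : X ^ n ∣ d⁄dX R f) : X ^ (n + 1) ∣ f - C (constantCoeff f) := by
  rw [X_pow_dvd_iff] at h ⊢
  rintro (_ | m) hm
  · simp
  · have hcoeff := h m (by omega)
    rw [coeff_derivative, mul_comm, ← Nat.cast_succ, ← nsmul_eq_mul] at hcoeff
    simpa [coeff_C] using (smul_eq_zero.mp hcoeff).resolve_left m.succ_ne_zero

end PowerSeries

theorem Derivation.mul_apply_sq_mul_aeval {R A : Type*} [CommRing R] [CommRing A] [Algebra R A]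
    (D : Derivation R A A) (s j g : A) (H : Polynomial R)
    (hj : 2 * D s * D j = -(g * Polynomial.aeval s (Polynomial.derivative H)) * j) :
    D s * D (j ^ 2 * Polynomial.aeval s H) =
      j ^ 2 * Polynomial.aeval s (Polynomial.derivative H) *
        (D s ^ 2 - g * Polynomial.aeval s H) := by
  have hchain : D (Polynomial.aeval s H) = Polynomial.aeval s (Polynomial.derivative H) * D s := by
    rw [Derivation.comp_aeval_eq, smul_eq_mul]
  rw [Derivation.leibniz, Derivation.leibniz_pow, hchain]
  simp only [smul_eq_mul]
  linear_combination (j * Polynomial.aeval s H) * hj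

theorem integrating_factor_general {K : Type*} [Field K] [CharZero K]
    (G Sd J : PowerSeries K) (H : Polynomial K) (α β : K) (d : ℕ)
    (hβ : β ≠ 0) (hH : H.eval α = 1)
    (hS0 : constantCoeff Sd = α) (hS1 : coeff 1 Sd = β)
    (hSd : (X : PowerSeries K) ^ d ∣ (derivative K Sd) ^ 2 - G * Polynomial.aeval Sd H)
    (hJ0 : constantCoeff J = 1)
    (hJ : 2 * derivative K Sd * derivative K J
      = -(G * Polynomial.aeval Sd (Polynomial.derivative H)) * J) :
    (X : PowerSeries K) ^ d ∣ J ^ 2 * Polynomial.aeval Sd H - 1 := by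
  have hS'_unit : IsUnit (d⁄dX K Sd) := by
    rw [isUnit_iff_constantCoeff, constantCoeff_derivative, hS1]
    exact hβ.isUnit
  have hderiv : X ^ d ∣ d⁄dX K (J ^ 2 * Polynomial.aeval Sd H) := by
    rw [← hS'_unit.dvd_mul_left, Derivation.mul_apply_sq_mul_aeval _ _ _ _ _ hJ]
    exact dvd_mul_of_dvd_right hSd _
  have hconst : constantCoeff (J ^ 2 * Polynomial.aeval Sd H) = 1 := by
    simp [constantCoeff_aeval, hJ0, hS0, hH]
  have hF := X_pow_succ_dvd_sub_constantCoeff hderiv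
  rw [hconst, map_one] at hF
  exact (pow_dvd_pow X d.le_succ).trans hF

/-- The integrating factor `J = exp(-∫ G·(H'∘S_d)/(2 S_d') dx)`, characterized by
`J(0) = 1` and `2·S_d'·J' = -G·(H'∘S_d)·J`, satisfies `J ≡ 1/√(H∘S_d) (mod x^d)`,
i.e. `J² · (H∘S_d) ≡ 1 (mod x^d)`, whenever `(S_d')² ≡ G·(H∘S_d) (mod x^d)` with
`S_d(0) = α`, `S_d'(0) = β ≠ 0`, `G(0) = β²` and `H(α) = 1`. -/
theorem integrating_factor {K : Type*} [Field K] [CharZero K]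
    (G Sd J : PowerSeries K) (H : Polynomial K) (α β : K) (d : ℕ) (hd : 0 < d)
    (hβ : β ≠ 0) (hH : H.eval α = 1) (hG : constantCoeff G = β ^ 2)
    (hS0 : constantCoeff Sd = α) (hS1 : coeff 1 Sd = β)
    (hSd : (X : PowerSeries K) ^ d ∣ (derivative K Sd) ^ 2 - G * Polynomial.aeval Sd H)
    (hJ0 : constantCoeff J = 1)
    (hJ : 2 * derivative K Sd * derivative K J
      = -(G * Polynomial.aeval Sd (Polynomial.derivative H)) * J) :
    (X : PowerSeries K) ^ d ∣ J ^ 2 * Polynomial.aeval Sd H - 1 :=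
  integrating_factor_general G Sd J H α β d hβ hH hS0 hS1 hSd hJ0 hJ
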